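/- There is an absolute constant K > 0 such that for every finite simple directed graph G=(V,E), every ρ ∈ (0,1] and every real C > 1, min-seed^{(1)}(G,ρ) ≤ K·C·ρ·|V| + Σ_{v ∈ V} (d^in(v) + 1)·exp(−3·C·ρ·d^in(v)). -/
import Mathlib

open Finset


/-- The in-neighborhood of `v` in the directed graph with edge relation `E`. -/
def inNbr {V : Type*} (E : V → V → Prop) (v : V) : Set V := {u | E u v}

/-- One round of the synchronous reversible cascade on a directed graph with edge
relation `E`: `dactive E ρ S k` is the set of active vertices in round `k`. -/
def dactive {V : Type*} (E : V → V → Prop) (ρ : ℝ) (S : Set V) : ℕ → Set V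
  | 0 => S
  | k + 1 =>
      {v | 0 < (inNbr E v).ncard ∧
        ρ * (inNbr E v).ncard ≤ ((inNbr E v ∩ dactive E ρ S k).ncard : ℝ)} ∪
      {v | v ∈ S ∧ (inNbr E v).ncard = 0}

/-- `dminSeed E ρ k` is the minimum number of seeds activating all vertices in round `k`. -/
noncomputable def dminSeed {V : Type*} (E : V → V → Prop) (ρ : ℝ) (k : ℕ) : ℕ :=
  sInf {m | ∃ S : Set V, S.ncard = m ∧ dactive E ρ S k = Set.univ}


-- weighted product identity
lemma L1 {V : Type} [Fintype V] [DecidableEq V] (p : ℝ) (a : V → ℝ) :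
    ∑ S ∈ (Finset.univ : Finset V).powerset,
      (p ^ S.card * (1 - p) ^ (Finset.univ \ S).card * ∏ v ∈ S, a v)
      = ∏ v : V, (p * a v + (1 - p)) := by
  rw [Finset.prod_add]
  refine Finset.sum_congr rfl fun S _ => ?_
  rw [Finset.prod_mul_distrib, Finset.prod_const, Finset.prod_const]
  ring

lemma L2 {V : Type} [Fintype V] [DecidableEq V] (p : ℝ) :
    ∑ S ∈ (Finset.univ : Finset V).powerset,
      (p ^ S.card * (1 - p) ^ (Finset.univ \ S).card) = 1 := by
  have := L1 (V := V) p (fun _ => 1)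
  simpa using this

lemma L3 {V : Type} [Fintype V] [DecidableEq V] (p : ℝ) (v : V) :
    ∑ S ∈ (Finset.univ : Finset V).powerset,
      (p ^ S.card * (1 - p) ^ (Finset.univ \ S).card * (if v ∈ S then (1:ℝ) else 0)) = p := by
  have key : ∀ S : Finset V, (if v ∈ S then (1:ℝ) else 0)
      = 1 - ∏ u ∈ S, (if u = v then (0:ℝ) else 1) := by
    intro S
    by_cases h : v ∈ S
    · rw [if_pos h, Finset.prod_eq_zero h (by simp)]; ring
    · rw [if_neg h, Finset.prod_eq_one (fun u hu => if_neg (by rintro rfl; exact h hu))]; ring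
  have e1 : ∑ S ∈ (Finset.univ : Finset V).powerset,
      (p ^ S.card * (1 - p) ^ (Finset.univ \ S).card * ∏ u ∈ S, (if u = v then (0:ℝ) else 1))
      = 1 - p := by
    rw [L1]
    have : ∀ u : V, (p * (if u = v then (0:ℝ) else 1) + (1 - p)) = if u = v then (1-p) else 1 := by
      intro u; split_ifs <;> ring
    rw [Finset.prod_congr rfl (fun u _ => this u), Finset.prod_ite_eq']
    simp
  calc ∑ S ∈ (Finset.univ : Finset V).powerset,
      (p ^ S.card * (1 - p) ^ (Finset.univ \ S).card * (if v ∈ S then (1:ℝ) else 0))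
      = ∑ S ∈ (Finset.univ : Finset V).powerset,
        (p ^ S.card * (1 - p) ^ (Finset.univ \ S).card * (1 - ∏ u ∈ S, (if u = v then (0:ℝ) else 1))) := by
        exact Finset.sum_congr rfl fun S _ => by rw [key]
    _ = ∑ S ∈ (Finset.univ : Finset V).powerset,
        (p ^ S.card * (1 - p) ^ (Finset.univ \ S).card)
        - ∑ S ∈ (Finset.univ : Finset V).powerset,
        (p ^ S.card * (1 - p) ^ (Finset.univ \ S).card * ∏ u ∈ S, (if u = v then (0:ℝ) else 1)) := by
        rw [← Finset.sum_sub_distrib]; exact Finset.sum_congr rfl fun S _ => by ring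
    _ = p := by rw [L2, e1]; ring

-- expected size
lemma L4 {V : Type} [Fintype V] [DecidableEq V] (p : ℝ) :
    ∑ S ∈ (Finset.univ : Finset V).powerset,
      (p ^ S.card * (1 - p) ^ (Finset.univ \ S).card * S.card) = p * Fintype.card V := by
  have key : ∀ S : Finset V, (S.card : ℝ) = ∑ v : V, (if v ∈ S then (1:ℝ) else 0) := by
    intro S; rw [Finset.sum_ite_mem, Finset.univ_inter, Finset.sum_const]; simp
  calc ∑ S ∈ (Finset.univ : Finset V).powerset,
      (p ^ S.card * (1 - p) ^ (Finset.univ \ S).card * S.card)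
      = ∑ S ∈ (Finset.univ : Finset V).powerset, ∑ v : V,
        (p ^ S.card * (1 - p) ^ (Finset.univ \ S).card * (if v ∈ S then (1:ℝ) else 0)) := by
        refine Finset.sum_congr rfl fun S _ => ?_
        rw [key, Finset.mul_sum]
    _ = ∑ v : V, ∑ S ∈ (Finset.univ : Finset V).powerset,
        (p ^ S.card * (1 - p) ^ (Finset.univ \ S).card * (if v ∈ S then (1:ℝ) else 0)) :=
        Finset.sum_comm
    _ = ∑ v : V, p := Finset.sum_congr rfl fun v _ => L3 p v
    _ = p * Fintype.card V := by rw [Finset.sum_const]; simp [mul_comm]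

-- mgf
lemma L5 {V : Type} [Fintype V] [DecidableEq V] (p : ℝ) (A : Finset V) :
    ∑ S ∈ (Finset.univ : Finset V).powerset,
      (p ^ S.card * (1 - p) ^ (Finset.univ \ S).card * Real.exp (-((A ∩ S).card : ℝ)))
      = (p * Real.exp (-1) + (1 - p)) ^ A.card := by
  have key : ∀ S : Finset V, Real.exp (-((A ∩ S).card : ℝ))
      = ∏ u ∈ S, (if u ∈ A then Real.exp (-1) else 1) := by
    intro S
    rw [Finset.prod_ite_mem, Finset.prod_const, ← Real.exp_nat_mul, Finset.inter_comm]
    norm_num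
  calc ∑ S ∈ (Finset.univ : Finset V).powerset,
      (p ^ S.card * (1 - p) ^ (Finset.univ \ S).card * Real.exp (-((A ∩ S).card : ℝ)))
      = ∑ S ∈ (Finset.univ : Finset V).powerset,
        (p ^ S.card * (1 - p) ^ (Finset.univ \ S).card * ∏ u ∈ S, (if u ∈ A then Real.exp (-1) else 1)) :=
        Finset.sum_congr rfl fun S _ => by rw [key]
    _ = ∏ u : V, (p * (if u ∈ A then Real.exp (-1) else 1) + (1 - p)) := L1 p _
    _ = ∏ u : V, (if u ∈ A then (p * Real.exp (-1) + (1 - p)) else 1) := by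
        refine Finset.prod_congr rfl fun u _ => ?_; split_ifs <;> ring
    _ = (p * Real.exp (-1) + (1 - p)) ^ A.card := by
        rw [Finset.prod_ite_mem, Finset.univ_inter, Finset.prod_const]


-- numeric: exponent comparison
lemma Lnum {ρ C : ℝ} (hρ : 0 < ρ) (hC : 1 < C) (d : ℕ) :
    ρ * d + (-(7 * C * ρ * (1 - Real.exp (-1)))) * d ≤ -(3 * C * ρ * d) := by
  have he : Real.exp (-1) * Real.exp 1 = 1 := by
    rw [← Real.exp_add]; norm_num
  have h1 : (2.7182818283:ℝ) < Real.exp 1 := Real.exp_one_gt_d9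
  have hd : (0:ℝ) ≤ d := Nat.cast_nonneg d
  have hexp : Real.exp (-1) < 3/7 := by
    nlinarith [Real.exp_pos 1]
  have h2 : 1 + 3 * C < 7 * C * (1 - Real.exp (-1)) := by nlinarith
  have h3 : 0 ≤ ρ * d * (7 * C * (1 - Real.exp (-1)) - (1 + 3 * C)) :=
    mul_nonneg (mul_nonneg hρ.le hd) (by linarith)
  nlinarith [h3]

-- tail bound
lemma L6 {V : Type} [Fintype V] [DecidableEq V] {p ρ C : ℝ} (hρ : 0 < ρ) (hC : 1 < C)
    (hp : p = 7 * C * ρ) (hp1 : p ≤ 1) (A : Finset V) :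
    ∑ S ∈ (Finset.univ : Finset V).powerset,
      (p ^ S.card * (1 - p) ^ (Finset.univ \ S).card *
        (if ((A ∩ S).card : ℝ) < ρ * A.card then (1:ℝ) else 0))
      ≤ Real.exp (-(3 * C * ρ * A.card)) := by
  have hp0 : 0 < p := by rw [hp]; positivity
  have step1 : ∀ S ∈ (Finset.univ : Finset V).powerset,
      p ^ S.card * (1 - p) ^ (Finset.univ \ S).card *
        (if ((A ∩ S).card : ℝ) < ρ * A.card then (1:ℝ) else 0)
      ≤ p ^ S.card * (1 - p) ^ (Finset.univ \ S).card *
        (Real.exp (ρ * A.card) * Real.exp (-((A ∩ S).card : ℝ))) := by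
    intro S _
    have hw : 0 ≤ p ^ S.card * (1 - p) ^ (Finset.univ \ S).card := by
      apply mul_nonneg (pow_nonneg hp0.le _) (pow_nonneg (by linarith) _)
    apply mul_le_mul_of_nonneg_left _ hw
    rw [← Real.exp_add]
    split_ifs with h
    · exact Real.one_le_exp (by linarith)
    · positivity
  calc ∑ S ∈ (Finset.univ : Finset V).powerset,
      (p ^ S.card * (1 - p) ^ (Finset.univ \ S).card *
        (if ((A ∩ S).card : ℝ) < ρ * A.card then (1:ℝ) else 0))
      ≤ ∑ S ∈ (Finset.univ : Finset V).powerset,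
        (p ^ S.card * (1 - p) ^ (Finset.univ \ S).card *
          (Real.exp (ρ * A.card) * Real.exp (-((A ∩ S).card : ℝ)))) :=
        Finset.sum_le_sum step1
    _ = Real.exp (ρ * A.card) * ∑ S ∈ (Finset.univ : Finset V).powerset,
        (p ^ S.card * (1 - p) ^ (Finset.univ \ S).card * Real.exp (-((A ∩ S).card : ℝ))) := by
        rw [Finset.mul_sum]; exact Finset.sum_congr rfl fun S _ => by ring
    _ = Real.exp (ρ * A.card) * (p * Real.exp (-1) + (1 - p)) ^ A.card := by rw [L5]
    _ ≤ Real.exp (ρ * A.card) * Real.exp (-(p * (1 - Real.exp (-1)))) ^ A.card := by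
        apply mul_le_mul_of_nonneg_left _ (Real.exp_pos _).le
        apply pow_le_pow_left₀
        · nlinarith [Real.exp_pos (-1), Real.exp_le_one_iff.mpr (by norm_num : (-1:ℝ) ≤ 0),
            mul_nonneg hp0.le (Real.exp_pos (-1)).le]
        · nlinarith [Real.add_one_le_exp (-(p * (1 - Real.exp (-1))))]
    _ = Real.exp (ρ * A.card + (-(p * (1 - Real.exp (-1)))) * A.card) := by
        rw [← Real.exp_nat_mul, ← Real.exp_add]; ring_nf
    _ ≤ Real.exp (-(3 * C * ρ * A.card)) := by
        apply Real.exp_le_exp.mpr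
        rw [hp]
        exact Lnum hρ hC A.card

-- averaging
lemma L7 {V : Type} [Fintype V] [DecidableEq V] {p : ℝ} (hp0 : 0 < p) (hp1 : p < 1)
    (f : Finset V → ℝ) :
    ∃ S : Finset V, f S ≤ ∑ T ∈ (Finset.univ : Finset V).powerset,
      (p ^ T.card * (1 - p) ^ (Finset.univ \ T).card * f T) := by
  by_contra hcon
  push_neg at hcon
  set M := ∑ T ∈ (Finset.univ : Finset V).powerset,
      (p ^ T.card * (1 - p) ^ (Finset.univ \ T).card * f T) with hM
  have hlt : ∑ T ∈ (Finset.univ : Finset V).powerset,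
      (p ^ T.card * (1 - p) ^ (Finset.univ \ T).card * M) < M := by
    calc ∑ T ∈ (Finset.univ : Finset V).powerset,
        (p ^ T.card * (1 - p) ^ (Finset.univ \ T).card * M)
        < ∑ T ∈ (Finset.univ : Finset V).powerset,
          (p ^ T.card * (1 - p) ^ (Finset.univ \ T).card * f T) := by
          apply Finset.sum_lt_sum_of_nonempty
          · exact ⟨∅, Finset.empty_mem_powerset _⟩
          · intro T _
            have hw : 0 < p ^ T.card * (1 - p) ^ (Finset.univ \ T).card :=
              mul_pos (pow_pos hp0 _) (pow_pos (by linarith) _)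
            exact mul_lt_mul_of_pos_left (hcon T) hw
      _ = M := hM.symm
  rw [← Finset.sum_mul, L2, one_mul] at hlt
  exact lt_irrefl M hlt
lemma L8 {V : Type} [Fintype V] (E : V → V → Prop) (ρ : ℝ) (S : Set V)
    (h0 : ∀ v, (inNbr E v).ncard = 0 → v ∈ S)
    (h1 : ∀ v, 0 < (inNbr E v).ncard → ρ * (inNbr E v).ncard ≤ ((inNbr E v ∩ S).ncard : ℝ)) :
    dactive E ρ S 1 = Set.univ := by
  ext v
  simp only [dactive, Set.mem_union, Set.mem_setOf_eq, Set.mem_univ, iff_true]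
  rcases Nat.eq_zero_or_pos (inNbr E v).ncard with h | h
  · exact Or.inr ⟨h0 v h, h⟩
  · exact Or.inl ⟨h, h1 v h⟩

lemma L9 {V : Type} (E : V → V → Prop) (ρ : ℝ) (S : Set V)
    (h : dactive E ρ S 1 = Set.univ) : dminSeed E ρ 1 ≤ S.ncard :=
  Nat.sInf_le ⟨S, rfl, h⟩
theorem stmt_6 :
    ∃ K : ℝ, 0 < K ∧
      ∀ (V : Type) [Fintype V] (E : V → V → Prop), Irreflexive E →
        ∀ ρ : ℝ, 0 < ρ → ρ ≤ 1 → ∀ C : ℝ, 1 < C →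
          (dminSeed E ρ 1 : ℝ) ≤ K * C * ρ * (Fintype.card V) +
            ∑ v : V, (((inNbr E v).ncard : ℝ) + 1) *
              Real.exp (-(3 * C * ρ * ((inNbr E v).ncard : ℝ))) := by
  classical
  refine ⟨7, by norm_num, ?_⟩
  intro V _ E _ ρ hρ hρ1 C hC
  classical
  set n := Fintype.card V with hn
  have hC0 : (0:ℝ) < C := lt_trans one_pos hC
  set A : V → Finset V := fun v => (Set.toFinite (inNbr E v)).toFinset with hA
  have hcardA : ∀ v, (inNbr E v).ncard = (A v).card := fun v =>
    Set.ncard_eq_toFinset_card _ _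
  have hint : ∀ (v : V) (T : Finset V), (inNbr E v ∩ ↑T).ncard = ((A v) ∩ T).card := by
    intro v T
    rw [← Set.ncard_coe_finset]
    congr 1
    ext u
    simp [hA, Set.Finite.mem_toFinset, inNbr]
  have hsumnn : (0:ℝ) ≤ ∑ v : V, (((inNbr E v).ncard : ℝ) + 1) *
      Real.exp (-(3 * C * ρ * ((inNbr E v).ncard : ℝ))) := by
    apply Finset.sum_nonneg
    intro v _
    positivity
  by_cases hcase : 1 ≤ 7 * C * ρ
  · -- trivial: seed everything
    have hact : dactive E ρ (Set.univ : Set V) 1 = Set.univ := by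
      apply L8
      · intro v _; trivial
      · intro v hv
        rw [Set.inter_univ]
        have : (0:ℝ) ≤ ((inNbr E v).ncard : ℝ) := Nat.cast_nonneg _
        nlinarith
    have h9 : dminSeed E ρ 1 ≤ (Set.univ : Set V).ncard := L9 E ρ _ hact
    rw [Set.ncard_univ, Nat.card_eq_fintype_card] at h9
    have h9' : (dminSeed E ρ 1 : ℝ) ≤ n := by exact_mod_cast h9
    have hn0 : (0:ℝ) ≤ (n:ℝ) := Nat.cast_nonneg _
    nlinarith
  · push_neg at hcase
    set p := 7 * C * ρ with hp
    have hp0 : 0 < p := by rw [hp]; positivity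
    have hp1 : p < 1 := hcase
    set F : Finset V → Finset V := fun S =>
      Finset.univ.filter (fun v => (((A v) ∩ S).card : ℝ) < ρ * (A v).card) with hF
    set Z : Finset V := Finset.univ.filter (fun v => (A v).card = 0) with hZ
    set cost : Finset V → ℝ := fun S =>
      (S.card : ℝ) + (Z.card : ℝ) + ∑ v ∈ F S, ((A v).card : ℝ) with hcost
    -- expectation of cost
    set tail : V → ℝ := fun v => ∑ T ∈ (Finset.univ : Finset V).powerset,
      (p ^ T.card * (1 - p) ^ (Finset.univ \ T).card *
        (if (((A v) ∩ T).card : ℝ) < ρ * (A v).card then (1:ℝ) else 0)) with htail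
    have htail_le : ∀ v, tail v ≤ Real.exp (-(3 * C * ρ * ((A v).card : ℝ))) := fun v =>
      L6 hρ hC hp hp1.le (A v)
    have htail_nn : ∀ v, 0 ≤ tail v := by
      intro v
      apply Finset.sum_nonneg
      intro T _
      have h1 : (0:ℝ) ≤ p ^ T.card := pow_nonneg hp0.le _
      have h2 : (0:ℝ) ≤ (1 - p) ^ (Finset.univ \ T).card := pow_nonneg (by linarith) _
      positivity
    have hEcost : ∑ T ∈ (Finset.univ : Finset V).powerset,
        (p ^ T.card * (1 - p) ^ (Finset.univ \ T).card * cost T)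
        ≤ p * n + ∑ v : V, (((A v).card : ℝ) + 1) *
            Real.exp (-(3 * C * ρ * ((A v).card : ℝ))) := by
      have split : ∑ T ∈ (Finset.univ : Finset V).powerset,
          (p ^ T.card * (1 - p) ^ (Finset.univ \ T).card * cost T)
          = p * n + ((Z.card : ℝ) + ∑ v : V, ((A v).card : ℝ) * tail v) := by
        have e3 : ∀ T : Finset V, ∑ v ∈ F T, ((A v).card : ℝ)
            = ∑ v : V, ((A v).card : ℝ) *
                (if (((A v) ∩ T).card : ℝ) < ρ * (A v).card then (1:ℝ) else 0) := by
          intro T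
          rw [hF]
          rw [Finset.sum_filter]
          refine Finset.sum_congr rfl fun v _ => ?_
          split_ifs <;> ring
        calc ∑ T ∈ (Finset.univ : Finset V).powerset,
            (p ^ T.card * (1 - p) ^ (Finset.univ \ T).card * cost T)
            = (∑ T ∈ (Finset.univ : Finset V).powerset,
                (p ^ T.card * (1 - p) ^ (Finset.univ \ T).card * (T.card : ℝ)))
              + (Z.card : ℝ) * (∑ T ∈ (Finset.univ : Finset V).powerset,
                (p ^ T.card * (1 - p) ^ (Finset.univ \ T).card))
              + ∑ T ∈ (Finset.univ : Finset V).powerset,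
                (p ^ T.card * (1 - p) ^ (Finset.univ \ T).card * ∑ v ∈ F T, ((A v).card : ℝ)) := by
              rw [Finset.mul_sum, ← Finset.sum_add_distrib, ← Finset.sum_add_distrib]
              refine Finset.sum_congr rfl fun T _ => ?_
              rw [hcost]; ring
          _ = p * n + (Z.card : ℝ) + ∑ v : V, ((A v).card : ℝ) * tail v := by
              rw [L4, L2, mul_one]
              congr 1
              calc ∑ T ∈ (Finset.univ : Finset V).powerset,
                  (p ^ T.card * (1 - p) ^ (Finset.univ \ T).card * ∑ v ∈ F T, ((A v).card : ℝ))
                  = ∑ T ∈ (Finset.univ : Finset V).powerset, ∑ v : V,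
                    (((A v).card : ℝ) * (p ^ T.card * (1 - p) ^ (Finset.univ \ T).card *
                      (if (((A v) ∩ T).card : ℝ) < ρ * (A v).card then (1:ℝ) else 0))) := by
                    refine Finset.sum_congr rfl fun T _ => ?_
                    rw [e3, Finset.mul_sum]
                    refine Finset.sum_congr rfl fun v _ => ?_
                    ring
                _ = ∑ v : V, ((A v).card : ℝ) * tail v := by
                    rw [Finset.sum_comm]
                    refine Finset.sum_congr rfl fun v _ => ?_
                    rw [htail, Finset.mul_sum]
          _ = p * n + ((Z.card : ℝ) + ∑ v : V, ((A v).card : ℝ) * tail v) := by ring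
      rw [split]
      have hZcard : (Z.card : ℝ) = ∑ v : V, (if (A v).card = 0 then (1:ℝ) else 0) := by
        rw [hZ, Finset.card_filter]
        push_cast
        rfl
      rw [hZcard, ← Finset.sum_add_distrib]
      have perv : ∀ v : V, (if (A v).card = 0 then (1:ℝ) else 0) + ((A v).card : ℝ) * tail v
          ≤ (((A v).card : ℝ) + 1) * Real.exp (-(3 * C * ρ * ((A v).card : ℝ))) := by
        intro v
        by_cases hd : (A v).card = 0
        · rw [if_pos hd, hd]
          simp
        · rw [if_neg hd]
          have h1 : ((A v).card : ℝ) * tail v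
              ≤ ((A v).card : ℝ) * Real.exp (-(3 * C * ρ * ((A v).card : ℝ))) :=
            mul_le_mul_of_nonneg_left (htail_le v) (Nat.cast_nonneg _)
          have h2 : (0:ℝ) < Real.exp (-(3 * C * ρ * ((A v).card : ℝ))) := Real.exp_pos _
          nlinarith
      linarith [Finset.sum_le_sum (fun v (_ : v ∈ Finset.univ) => perv v)]
    obtain ⟨S₀, hS₀⟩ := L7 hp0 hp1 cost
    set T : Finset V := S₀ ∪ Z ∪ (F S₀).biUnion A with hT
    have hTcard : (T.card : ℝ) ≤ cost S₀ := by
      have h1 : T.card ≤ S₀.card + Z.card + ∑ v ∈ F S₀, (A v).card := by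
        calc T.card ≤ (S₀ ∪ Z).card + ((F S₀).biUnion A).card := Finset.card_union_le _ _
          _ ≤ S₀.card + Z.card + ((F S₀).biUnion A).card := by
              have := Finset.card_union_le S₀ Z
              omega
          _ ≤ S₀.card + Z.card + ∑ v ∈ F S₀, (A v).card := by
              have := Finset.card_biUnion_le (s := F S₀) (t := A)
              omega
      calc (T.card : ℝ) ≤ ((S₀.card + Z.card + ∑ v ∈ F S₀, (A v).card : ℕ) : ℝ) := by
            exact_mod_cast h1
        _ = cost S₀ := by rw [hcost]; push_cast; ring
    have hact : dactive E ρ (↑T : Set V) 1 = Set.univ := by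
      apply L8
      · intro v hv
        have hd : (A v).card = 0 := by rw [← hcardA]; exact hv
        have hvZ : v ∈ Z := Finset.mem_filter.mpr ⟨Finset.mem_univ v, hd⟩
        have : v ∈ T := by rw [hT]; simp [hvZ]
        exact this
      · intro v hv
        rw [hint v T, hcardA] at *
        by_cases hvF : v ∈ F S₀
        · have hsub : A v ⊆ T := by
            rw [hT]
            exact Finset.Subset.trans (Finset.subset_biUnion_of_mem A hvF)
              (Finset.subset_union_right)
          rw [Finset.inter_eq_left.mpr hsub]
          have : (0:ℝ) ≤ ((A v).card : ℝ) := Nat.cast_nonneg _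
          nlinarith
        · rw [hF, Finset.mem_filter] at hvF
          push_neg at hvF
          have h2 : ρ * ((A v).card : ℝ) ≤ ((A v ∩ S₀).card : ℝ) :=
            hvF (Finset.mem_univ v)
          have h3 : (A v ∩ S₀).card ≤ (A v ∩ T).card := by
            apply Finset.card_le_card
            apply Finset.inter_subset_inter_left
            rw [hT]
            exact Finset.Subset.trans Finset.subset_union_left Finset.subset_union_left
          calc ρ * ((A v).card : ℝ) ≤ ((A v ∩ S₀).card : ℝ) := h2
            _ ≤ ((A v ∩ T).card : ℝ) := by exact_mod_cast h3
    have h9 : dminSeed E ρ 1 ≤ (↑T : Set V).ncard := L9 E ρ _ hact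
    rw [Set.ncard_coe_finset] at h9
    have hfinal : (dminSeed E ρ 1 : ℝ) ≤ cost S₀ :=
      le_trans (by exact_mod_cast h9) hTcard
    calc (dminSeed E ρ 1 : ℝ) ≤ cost S₀ := hfinal
      _ ≤ p * n + ∑ v : V, (((A v).card : ℝ) + 1) *
            Real.exp (-(3 * C * ρ * ((A v).card : ℝ))) := le_trans hS₀ hEcost
      _ = 7 * C * ρ * n + ∑ v : V, (((inNbr E v).ncard : ℝ) + 1) *
            Real.exp (-(3 * C * ρ * ((inNbr E v).ncard : ℝ))) := by
          rw [hp]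
          congr 1
          exact Finset.sum_congr rfl fun v _ => by rw [hcardA]
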